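/- arXiv:1710.07046 — 7 statements merged into one kernel-verified Lean document; each statement's English description precedes it below -/
import Mathlib

section
/- In a d-dimensional complex Hilbert space, any family of pairwise mutually unbiased orthonormal bases contains at most d+1 bases. -/
/-!
Send a unit vector `u` of `ℂᵈ` to the traceless part `u uᴴ - I / d` of its projector, a vector of
the `d²`-dimensional space of matrices with the Hilbert–Schmidt inner product. The images of unit
vectors `u, v` have inner product `|⟪u, v⟫|² - 1 / d`. Hence the images of the vectors of one basis
have Gram matrix `δ - 1 / d`, so any `d - 1` of them are linearly independent; the images of vectors
from two unbiased bases are orthogonal; and all images are orthogonal to `I`. This gives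
`1 + n (d - 1)` linearly independent vectors in dimension `d²`, whence `n ≤ d + 1`.
-/

open Finset

section GramIndependence

variable {𝕜 E : Type*} [RCLike 𝕜] [NormedAddCommGroup E] [InnerProductSpace 𝕜 E]

theorem linearIndependent_of_inner_eq_ite_sub {κ : Type*} [Fintype κ] [DecidableEq κ]
    (w : κ → E) (c : 𝕜) (hw : ∀ k l, inner 𝕜 (w k) (w l) = (if k = l then 1 else 0) - c)
    (hc : (Fintype.card κ : 𝕜) * c ≠ 1) : LinearIndependent 𝕜 w := by
  rw [Fintype.linearIndependent_iff]
  intro g hg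
  set S := ∑ k, g k
  have hconst : ∀ l, g l = c * S := by
    intro l
    have h := congrArg (inner 𝕜 (w l)) hg
    simp only [inner_sum, inner_smul_right, hw, inner_zero_right, mul_sub, mul_ite, mul_one,
      mul_zero, sum_sub_distrib, sum_ite_eq, mem_univ, if_true] at h
    rw [← sum_mul] at h
    linear_combination h
  have hS : S = 0 := by
    have h : S = Fintype.card κ * c * S :=
      calc S = ∑ _l : κ, c * S := sum_congr rfl fun l _ => hconst l
        _ = Fintype.card κ * c * S := by rw [sum_const, card_univ, nsmul_eq_mul, mul_assoc]
    have : S * (1 - Fintype.card κ * c) = 0 := by linear_combination h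
    exact (mul_eq_zero.mp this).resolve_right (sub_ne_zero.mpr hc.symm)
  intro l
  rw [hconst, hS, mul_zero]

theorem linearIndependent_uncurry_of_inner_eq_zero {β κ : Type*} [Fintype β] [Fintype κ]
    (w : β → κ → E) (hw : ∀ i, LinearIndependent 𝕜 (w i))
    (horth : ∀ i j, i ≠ j → ∀ k l, inner 𝕜 (w i k) (w j l) = 0) :
    LinearIndependent 𝕜 (Function.uncurry w) := by
  classical
  rw [Fintype.linearIndependent_iff]
  intro g hg
  set x : β → E := fun i => ∑ k, g (i, k) • w i k
  have hsum : ∑ j, x j = 0 := by rw [← hg, Fintype.sum_prod_type]; rfl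
  have hx : ∀ i, x i = 0 := by
    intro i
    have h := congrArg (inner 𝕜 (x i)) hsum
    rw [inner_sum, inner_zero_right, sum_eq_single i] at h
    · exact inner_self_eq_zero.mp h
    · intro j _ hji
      simp only [x, sum_inner, inner_sum, inner_smul_left, inner_smul_right, horth i j hji.symm,
        mul_zero, sum_const_zero]
    · simp
  rintro ⟨i, k⟩
  exact Fintype.linearIndependent_iff.mp (hw i) (fun k => g (i, k)) (hx i) k

theorem LinearIndependent.option_of_inner_eq_zero {ι : Type*} {v : ι → E}
    (hv : LinearIndependent 𝕜 v) {x : E} (hx : x ≠ 0) (horth : ∀ i, inner 𝕜 x (v i) = 0) :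
    LinearIndependent 𝕜 (fun o => Option.casesOn' o x v : Option ι → E) := by
  refine hv.option fun hmem => hx ?_
  have hself : x ∈ (𝕜 ∙ x)ᗮ := Submodule.span_le.mpr (Set.range_subset_iff.mpr fun i =>
    Submodule.mem_orthogonal_singleton_iff_inner_right.mpr (horth i)) hmem
  exact inner_self_eq_zero.mp (Submodule.mem_orthogonal_singleton_iff_inner_right.mp hself)

end GramIndependence

namespace MutuallyUnbiased

variable {𝕜 ι : Type*} [RCLike 𝕜] [Fintype ι]

open ComplexConjugate

/-- The matrix `u uᴴ`, flattened so that the inner product becomes the Hilbert–Schmidt one. -/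
noncomputable def projVec (u : EuclideanSpace 𝕜 ι) : EuclideanSpace 𝕜 (ι × ι) :=
  WithLp.toLp 2 fun p => conj (u p.1) * u p.2

theorem inner_projVec_projVec (u v : EuclideanSpace 𝕜 ι) :
    inner 𝕜 (projVec u) (projVec v) = ((‖inner 𝕜 u v‖ ^ 2 : ℝ) : 𝕜) := by
  rw [RCLike.ofReal_pow, ← RCLike.conj_mul]
  simp only [projVec, PiLp.inner_apply, RCLike.inner_apply, map_sum, map_mul,
    RCLike.conj_conj, Fintype.sum_prod_type, sum_mul_sum]
  exact sum_congr rfl fun a _ => sum_congr rfl fun b _ => by ring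

variable [DecidableEq ι]

variable (𝕜 ι) in
noncomputable def identityVec : EuclideanSpace 𝕜 (ι × ι) :=
  WithLp.toLp 2 fun p => if p.1 = p.2 then 1 else 0

noncomputable def tracelessProjVec (u : EuclideanSpace 𝕜 ι) : EuclideanSpace 𝕜 (ι × ι) :=
  projVec u - (Fintype.card ι : 𝕜)⁻¹ • identityVec 𝕜 ι

theorem inner_identityVec_projVec (u : EuclideanSpace 𝕜 ι) :
    inner 𝕜 (identityVec 𝕜 ι) (projVec u) = inner 𝕜 u u := by
  simp only [projVec, identityVec, PiLp.inner_apply, RCLike.inner_apply, Fintype.sum_prod_type,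
    apply_ite conj, map_one, map_zero, mul_ite, mul_one, mul_zero, sum_ite_eq, mem_univ, if_true]
  exact sum_congr rfl fun _ _ => mul_comm _ _

theorem inner_identityVec_self : inner 𝕜 (identityVec 𝕜 ι) (identityVec 𝕜 ι) = Fintype.card ι := by
  simp only [identityVec, PiLp.inner_apply, RCLike.inner_apply,
    Fintype.sum_prod_type, apply_ite conj, map_one, map_zero]
  simp

theorem identityVec_ne_zero [Nonempty ι] : identityVec 𝕜 ι ≠ 0 := by
  intro h
  have hcard := inner_identityVec_self (𝕜 := 𝕜) (ι := ι)
  rw [h, inner_zero_left, eq_comm, Nat.cast_eq_zero] at hcard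
  exact Fintype.card_ne_zero hcard

theorem inner_identityVec_tracelessProjVec [Nonempty ι] {u : EuclideanSpace 𝕜 ι} (hu : ‖u‖ = 1) :
    inner 𝕜 (identityVec 𝕜 ι) (tracelessProjVec u) = 0 := by
  have hd : (Fintype.card ι : 𝕜) ≠ 0 := Nat.cast_ne_zero.mpr Fintype.card_ne_zero
  rw [tracelessProjVec, inner_sub_right, inner_smul_right, inner_identityVec_projVec,
    inner_identityVec_self, inner_self_eq_norm_sq_to_K, hu, inv_mul_cancel₀ hd]
  simp

theorem inner_tracelessProjVec_tracelessProjVec {u v : EuclideanSpace 𝕜 ι} (hu : ‖u‖ = 1)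
    (hv : ‖v‖ = 1) : inner 𝕜 (tracelessProjVec u) (tracelessProjVec v)
      = ((‖inner 𝕜 u v‖ ^ 2 : ℝ) : 𝕜) - (Fintype.card ι : 𝕜)⁻¹ := by
  have hpu : inner 𝕜 (projVec u) (identityVec 𝕜 ι) = 1 := by
    rw [← inner_conj_symm, inner_identityVec_projVec, inner_self_eq_norm_sq_to_K, hu]; simp
  have hpv : inner 𝕜 (identityVec 𝕜 ι) (projVec v) = 1 := by
    rw [inner_identityVec_projVec, inner_self_eq_norm_sq_to_K, hv]; simp
  simp only [tracelessProjVec, inner_sub_left, inner_sub_right, inner_smul_left, inner_smul_right,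
    inner_projVec_projVec, hpu, hpv, inner_identityVec_self, map_inv₀, map_natCast]
  by_cases hd : (Fintype.card ι : 𝕜) = 0
  · simp [hd]
  · field_simp
    ring

theorem linearIndependent_tracelessProjVec_comp {κ : Type*} [Fintype κ]
    {b : κ → EuclideanSpace 𝕜 ι} (hb : Orthonormal 𝕜 b) (hκ : Fintype.card κ ≠ Fintype.card ι) :
    LinearIndependent 𝕜 (tracelessProjVec ∘ b) := by
  classical
  refine linearIndependent_of_inner_eq_ite_sub _ (Fintype.card ι : 𝕜)⁻¹ (fun k l => ?_) ?_
  · rw [Function.comp_apply, Function.comp_apply,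
      inner_tracelessProjVec_tracelessProjVec (hb.1 k) (hb.1 l), orthonormal_iff_ite.mp hb]
    split_ifs <;> simp
  · by_cases hd : (Fintype.card ι : 𝕜) = 0
    · simp [hd]
    · rw [Ne, mul_inv_eq_one₀ hd]
      exact_mod_cast hκ

end MutuallyUnbiased

open MutuallyUnbiased in
/-- In a `d`-dimensional complex Hilbert space, any family of pairwise mutually
unbiased orthonormal bases contains at most `d + 1` bases. -/
theorem mub_family_card_le_dim_add_one (d n : ℕ) (hd : 1 < d)
    (B : Fin n → OrthonormalBasis (Fin d) ℂ (EuclideanSpace ℂ (Fin d)))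
    (hMUB : ∀ i j : Fin n, i ≠ j → ∀ k l : Fin d,
      ‖(inner ℂ (B i k) (B j l) : ℂ)‖ ^ 2 = 1 / (d : ℝ)) :
    n ≤ d + 1 := by
  obtain ⟨m, rfl⟩ : ∃ m, d = m + 1 := ⟨d - 1, by omega⟩
  -- The `d` images of a basis sum to zero, so one basis vector has to be dropped.
  let w : Fin n → Fin m → EuclideanSpace ℂ (Fin (m + 1) × Fin (m + 1)) :=
    fun i k => tracelessProjVec (B i k.castSucc)
  have hblock : ∀ i, LinearIndependent ℂ (w i) := fun i =>
    linearIndependent_tracelessProjVec_comp ((B i).orthonormal.comp _ (Fin.castSucc_injective m))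
      (by simp)
  have hunbiased : ∀ i j, i ≠ j → ∀ k l, inner ℂ (w i k) (w j l) = 0 := by
    intro i j hij k l
    rw [inner_tracelessProjVec_tracelessProjVec (by simp) (by simp), hMUB i j hij]
    simp
  have hindep := (linearIndependent_uncurry_of_inner_eq_zero w hblock hunbiased)
    |>.option_of_inner_eq_zero identityVec_ne_zero
      fun _ => inner_identityVec_tracelessProjVec (by simp)
  have hcard := hindep.fintype_card_le_finrank
  simp only [Fintype.card_option, Fintype.card_prod, Fintype.card_fin,
    finrank_euclideanSpace] at hcard
  have hm : 0 < m := by omega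
  nlinarith
end

section
/- Let {U_{xa} : x, a ∈ {0,…,d−1}} be a partitioned unitary error basis on ℂ^d, with partition {I} ⊔ C_* ⊔ C_0 ⊔ ⋯ ⊔ C_{d−1} into classes of d−1 commuting unitaries each (which together with I form maximal commuting classes of d operators). For each class, let B^i be an orthonormal basis of common eigenvectors of the operators in that class. Then the resulting d+1 orthonormal bases B^*, B^0, …, B^{d−1} are pairwise mutually unbiased, hence form a maximal family of mutually unbiased bases of ℂ^d. -/
/-!
Let a class be a family `f a` (`a ∈ ι`, `|ι| = d`) of trace-orthogonal matrices, diagonal in an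
orthonormal basis `B`, with `f z = 1`, and let `V j a` be the eigenvalue of `f a` on `B j`.
For two such classes `f, B, V` and `g, C, W` one has `tr ((f a)ᴴ * g b) = (Vᴴ * M * W) a b`, where
`M j k = ‖⟪B j, C k⟫‖²`. Orthogonality inside a class gives `Vᴴ * V = d • 1`, so `V / √d` is
unitary and `V * Vᴴ = d • 1` as well; orthogonality between the classes gives
`Vᴴ * M * W = d • single z z 1`. Hence `d² • M = V * (Vᴴ * M * W) * Wᴴ`, whose entries are
`d * V j z * conj (W k z) = d`, so that every `‖⟪B j, C k⟫‖²` equals `1 / d`.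
-/

open Matrix
open scoped InnerProductSpace

section

variable {n : Type*} [Fintype n] [DecidableEq n]

theorem Matrix.trace_diagonal_mul_mul_diagonal_mul_conjTranspose (a b : n → ℂ)
    (X : Matrix n n ℂ) :
    (diagonal a * X * diagonal b * Xᴴ).trace = ∑ j, ∑ k, a j * (‖X j k‖ : ℂ) ^ 2 * b k := by
  simp only [trace, diag_apply, mul_apply, conjTranspose_apply, diagonal_apply, ite_mul, mul_ite,
    zero_mul, mul_zero, Finset.sum_ite_eq, Finset.sum_ite_eq', Finset.mem_univ, if_true]
  refine Finset.sum_congr rfl fun j _ => Finset.sum_congr rfl fun k _ => ?_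
  rw [← Complex.mul_conj', RCLike.star_def]
  ring

theorem Matrix.apply_eq_inv_card_of_conjTranspose_mul_mul_eq_single {ι : Type*} [Fintype ι]
    [DecidableEq ι] (hcard : Fintype.card ι = Fintype.card n) {V W : Matrix n ι ℂ}
    {M : Matrix n n ℂ} {z : ι} (hV : Vᴴ * V = (Fintype.card n : ℂ) • 1)
    (hW : Wᴴ * W = (Fintype.card n : ℂ) • 1)
    (hM : Vᴴ * M * W = single z z (Fintype.card n : ℂ))
    (hVz : ∀ j, V j z = 1) (hWz : ∀ k, W k z = 1) (j k : n) :
    M j k = (Fintype.card n : ℂ)⁻¹ := by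
  set c : ℂ := (Fintype.card n : ℂ)
  have hc : c ≠ 0 := Nat.cast_ne_zero.mpr (hcard ▸ (Fintype.card_pos_iff.mpr ⟨z⟩).ne')
  have hcomm : ∀ X : Matrix n ι ℂ, Xᴴ * X = c • 1 → X * Xᴴ = c • 1 := fun X hX => by
    have hleft : (c⁻¹ • Xᴴ) * X = 1 := by
      rw [Matrix.smul_mul, hX, smul_smul, inv_mul_cancel₀ hc, one_smul]
    have hright := (mul_eq_one_comm_of_equiv (Fintype.equivOfCardEq hcard)).mp hleft
    rw [Matrix.mul_smul] at hright
    rw [← hright, smul_smul, mul_inv_cancel₀ hc, one_smul]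
  have hsq : (c * c) • M = V * single z z c * Wᴴ :=
    calc (c * c) • M = (V * Vᴴ) * M * (W * Wᴴ) := by
          rw [hcomm V hV, hcomm W hW]; simp [smul_smul]
      _ = V * (Vᴴ * M * W) * Wᴴ := by simp only [Matrix.mul_assoc]
      _ = V * single z z c * Wᴴ := by rw [hM]
  have hjk : c * c * M j k = c := by
    simpa [mul_apply, single_apply, ite_and, hVz, hWz] using congrFun (congrFun hsq j) k
  exact eq_inv_of_mul_eq_one_left (mul_left_cancel₀ hc (by linear_combination hjk))

namespace OrthonormalBasis

variable (B C : OrthonormalBasis n ℂ (EuclideanSpace ℂ n))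

theorem eq_toMatrix_mul_diagonal_mul {A : Matrix n n ℂ} {μ : n → ℂ}
    (hA : ∀ j, A *ᵥ B j = μ j • ⇑(B j)) :
    A = (EuclideanSpace.basisFun n ℂ).toBasis.toMatrix B * diagonal μ *
      ((EuclideanSpace.basisFun n ℂ).toBasis.toMatrix B)ᴴ := by
  set T := (EuclideanSpace.basisFun n ℂ).toBasis.toMatrix B
  have hAT : A * T = T * diagonal μ := by
    ext i j
    rw [mul_diagonal]
    simpa [T, Module.Basis.toMatrix_apply, mul_comm, mulVec, dotProduct, mul_apply] using
      congrFun (hA j) i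
  rw [← hAT, Matrix.mul_assoc, toMatrix_orthonormalBasis_self_mul_conjTranspose, Matrix.mul_one]

theorem trace_conjTranspose_mul_eq_sum_norm_inner_sq {A G : Matrix n n ℂ} {μ ν : n → ℂ}
    (hA : ∀ j, A *ᵥ B j = μ j • ⇑(B j)) (hG : ∀ k, G *ᵥ C k = ν k • ⇑(C k)) :
    (Aᴴ * G).trace = ∑ j, ∑ k, star (μ j) * (‖⟪B j, C k⟫_ℂ‖ : ℂ) ^ 2 * ν k := by
  have hgram : ∀ j k, (((EuclideanSpace.basisFun n ℂ).toBasis.toMatrix B)ᴴ *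
      (EuclideanSpace.basisFun n ℂ).toBasis.toMatrix C) j k = ⟪B j, C k⟫_ℂ := fun j k => by
    simp [Module.Basis.toMatrix_apply, mul_apply, EuclideanSpace.inner_eq_star_dotProduct,
      dotProduct, mul_comm]
  rw [B.eq_toMatrix_mul_diagonal_mul hA, C.eq_toMatrix_mul_diagonal_mul hG]
  set T := (EuclideanSpace.basisFun n ℂ).toBasis.toMatrix B
  set S := (EuclideanSpace.basisFun n ℂ).toBasis.toMatrix C
  have hT : T * Tᴴ = 1 := toMatrix_orthonormalBasis_self_mul_conjTranspose _ _
  have hconj : (T * diagonal μ * Tᴴ)ᴴ * (S * diagonal ν * Sᴴ) =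
      T * (diagonal (star μ) * (Tᴴ * S) * diagonal ν * (Tᴴ * S)ᴴ) * Tᴴ := by
    simp only [conjTranspose_mul, conjTranspose_conjTranspose, diagonal_conjTranspose,
      Matrix.mul_assoc, hT, Matrix.mul_one]
  rw [hconj, trace_mul_cycle, ← Matrix.mul_assoc, ← Matrix.mul_assoc,
    toMatrix_orthonormalBasis_conjTranspose_mul_self, Matrix.one_mul,
    trace_diagonal_mul_mul_diagonal_mul_conjTranspose]
  simp only [hgram, Pi.star_apply]

theorem conjTranspose_mul_mul_eq_trace {ι : Type*} {f g : ι → Matrix n n ℂ}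
    {V W : Matrix n ι ℂ} (hf : ∀ j a, f a *ᵥ B j = V j a • ⇑(B j))
    (hg : ∀ k b, g b *ᵥ C k = W k b • ⇑(C k)) :
    Vᴴ * (of fun j k => (‖⟪B j, C k⟫_ℂ‖ : ℂ) ^ 2) * W = of fun a b => ((f a)ᴴ * g b).trace := by
  ext a b
  rw [of_apply, B.trace_conjTranspose_mul_eq_sum_norm_inner_sq C (hf · a) (hg · b)]
  simp only [mul_apply, conjTranspose_apply, of_apply, Finset.sum_mul]
  exact Finset.sum_comm

theorem of_norm_inner_sq_self_eq_one : (of fun j k => (‖⟪B j, B k⟫_ℂ‖ : ℂ) ^ 2) = 1 := by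
  ext j k
  simp [orthonormal_iff_ite.mp B.orthonormal, one_apply, apply_ite]

theorem exists_eigenvalue_matrix {ι : Type*} {f : ι → Matrix n n ℂ} {z : ι} (hfz : f z = 1)
    (hfB : ∀ a ≠ z, ∀ j, ∃ μ : ℂ, f a *ᵥ B j = μ • ⇑(B j)) :
    ∃ V : Matrix n ι ℂ, (∀ j a, f a *ᵥ B j = V j a • ⇑(B j)) ∧ ∀ j, V j z = 1 := by
  classical
  refine ⟨fun j a => if h : a = z then 1 else (hfB a h j).choose, fun j a => ?_,
    fun j => dif_pos rfl⟩
  by_cases h : a = z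
  · subst h
    simp [hfz]
  · simpa [h] using (hfB a h j).choose_spec

theorem norm_inner_sq_eq_inv_card_of_trace_orthogonal {ι : Type*} [Fintype ι] [DecidableEq ι]
    (hcard : Fintype.card ι = Fintype.card n) {f g : ι → Matrix n n ℂ} {z : ι}
    (hfz : f z = 1) (hgz : g z = 1)
    (hf : ∀ a b, ((f a)ᴴ * f b).trace = if a = b then (Fintype.card n : ℂ) else 0)
    (hg : ∀ a b, ((g a)ᴴ * g b).trace = if a = b then (Fintype.card n : ℂ) else 0)
    (hfg : ∀ a b, ((f a)ᴴ * g b).trace = if a = z ∧ b = z then (Fintype.card n : ℂ) else 0)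
    (hfB : ∀ a ≠ z, ∀ j, ∃ μ : ℂ, f a *ᵥ B j = μ • ⇑(B j))
    (hgC : ∀ b ≠ z, ∀ k, ∃ μ : ℂ, g b *ᵥ C k = μ • ⇑(C k)) (j k : n) :
    ‖⟪B j, C k⟫_ℂ‖ ^ 2 = 1 / (Fintype.card n : ℝ) := by
  obtain ⟨V, hV, hVz⟩ := B.exists_eigenvalue_matrix hfz hfB
  obtain ⟨W, hW, hWz⟩ := C.exists_eigenvalue_matrix hgz hgC
  have hVV : Vᴴ * V = (Fintype.card n : ℂ) • 1 := by
    rw [← Matrix.mul_one Vᴴ, ← B.of_norm_inner_sq_self_eq_one,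
      B.conjTranspose_mul_mul_eq_trace B hV hV]
    ext a b
    simp [hf, one_apply]
  have hWW : Wᴴ * W = (Fintype.card n : ℂ) • 1 := by
    rw [← Matrix.mul_one Wᴴ, ← C.of_norm_inner_sq_self_eq_one,
      C.conjTranspose_mul_mul_eq_trace C hW hW]
    ext a b
    simp [hg, one_apply]
  have hVW : Vᴴ * (of fun j k => (‖⟪B j, C k⟫_ℂ‖ : ℂ) ^ 2) * W =
      single z z (Fintype.card n : ℂ) := by
    rw [B.conjTranspose_mul_mul_eq_trace C hV hW]
    ext a b
    simp [hfg, single_apply, eq_comm]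
  have hjk := apply_eq_inv_card_of_conjTranspose_mul_mul_eq_single hcard hVV hWW hVW hVz hWz j k
  rw [of_apply] at hjk
  rw [one_div]
  exact Complex.ofReal_injective (by push_cast; exact hjk)

end OrthonormalBasis

end

theorem partitioned_ueb_gives_maximal_mubs_general (d : ℕ) (hd : 0 < d)
    (U : Fin d → Fin d → Matrix (Fin d) (Fin d) ℂ)
    (htr : ∀ x a y b, Matrix.trace ((U x a).conjTranspose * U y b)
      = if x = y ∧ a = b then (d : ℂ) else 0)
    (hId : U ⟨0, hd⟩ ⟨0, hd⟩ = 1)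
    (Bstar : OrthonormalBasis (Fin d) ℂ (EuclideanSpace ℂ (Fin d)))
    (Bs : Fin d → OrthonormalBasis (Fin d) ℂ (EuclideanSpace ℂ (Fin d)))
    (hBstar : ∀ x, x ≠ (⟨0, hd⟩ : Fin d) → ∀ j, ∃ μ : ℂ,
      (U x ⟨0, hd⟩).mulVec (Bstar j) = fun m => μ * Bstar j m)
    (hBs : ∀ i k, k ≠ (⟨0, hd⟩ : Fin d) → ∀ j, ∃ μ : ℂ,
      (U i k).mulVec (Bs i j) = fun m => μ * Bs i j m) :
    (∀ i j k, ‖(inner ℂ (Bstar j) (Bs i k) : ℂ)‖ ^ 2 = 1 / (d : ℝ)) ∧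
    (∀ i m, i ≠ m → ∀ j k, ‖(inner ℂ (Bs i j) (Bs m k) : ℂ)‖ ^ 2 = 1 / (d : ℝ)) := by
  generalize (⟨0, hd⟩ : Fin d) = z at hId hBstar hBs
  set Cstar : Fin d → Matrix (Fin d) (Fin d) ℂ := fun x => U x z
  -- `U i z` belongs to `Cstar`, so the identity takes its slot in the class `C i`
  set C : Fin d → Fin d → Matrix (Fin d) (Fin d) ℂ := fun i a => U (if a = z then z else i) a
  have hCz : ∀ i, C i z = 1 := fun i => by simp only [C, if_true, hId]
  have hCstar : ∀ x y, ((Cstar x)ᴴ * Cstar y).trace =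
      if x = y then (Fintype.card (Fin d) : ℂ) else 0 := by
    simp only [Cstar, htr, and_true, Fintype.card_fin, implies_true]
  have hC : ∀ i a b, ((C i a)ᴴ * C i b).trace =
      if a = b then (Fintype.card (Fin d) : ℂ) else 0 := by
    simp only [C, htr, Fintype.card_fin]; grind
  have hCstarC : ∀ i x a, ((Cstar x)ᴴ * C i a).trace =
      if x = z ∧ a = z then (Fintype.card (Fin d) : ℂ) else 0 := by
    simp only [Cstar, C, htr, Fintype.card_fin]; grind
  have hCC : ∀ i m, i ≠ m → ∀ a b, ((C i a)ᴴ * C m b).trace =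
      if a = z ∧ b = z then (Fintype.card (Fin d) : ℂ) else 0 := by
    simp only [C, htr, Fintype.card_fin]; grind
  have hCB : ∀ i, ∀ a ≠ z, ∀ j, ∃ μ : ℂ, C i a *ᵥ Bs i j = μ • ⇑(Bs i j) := fun i a ha j => by
    simp only [C, if_neg ha]
    exact hBs i a ha j
  refine ⟨fun i j k => ?_, fun i m him j k => ?_⟩
  · simpa using Bstar.norm_inner_sq_eq_inv_card_of_trace_orthogonal (Bs i) (f := Cstar) rfl hId
      (hCz i) hCstar (hC i) (hCstarC i) hBstar (hCB i) j k
  · simpa using (Bs i).norm_inner_sq_eq_inv_card_of_trace_orthogonal (Bs m) rfl (hCz i) (hCz m)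
      (hC i) (hC m) (hCC i m him) (hCB i) (hCB m) j k

/-- Let `{U x a}` be a partitioned unitary error basis on `ℂ^d`: the `U x a` are `d²`
unitaries, orthogonal with respect to the trace inner product, `U 0 0 = I`, the class
`C_* = {U x 0 : x ≠ 0}` pairwise commutes, and each class `C i = {U i k : k ≠ 0}`
pairwise commutes.  If `Bstar` is an orthonormal basis of common eigenvectors of the
class `C_*` and `Bs i` is an orthonormal basis of common eigenvectors of the class `C i`,
then the resulting `d + 1` orthonormal bases are pairwise mutually unbiased, hence form a
maximal family of mutually unbiased bases of `ℂ^d`. -/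
theorem partitioned_ueb_gives_maximal_mubs (d : ℕ) (hd : 0 < d)
    (U : Fin d → Fin d → Matrix (Fin d) (Fin d) ℂ)
    (hunit : ∀ x a, U x a ∈ Matrix.unitaryGroup (Fin d) ℂ)
    (htr : ∀ x a y b, Matrix.trace ((U x a).conjTranspose * U y b)
      = if x = y ∧ a = b then (d : ℂ) else 0)
    (hId : U ⟨0, hd⟩ ⟨0, hd⟩ = 1)
    (hstarComm : ∀ x y, U x ⟨0, hd⟩ * U y ⟨0, hd⟩ = U y ⟨0, hd⟩ * U x ⟨0, hd⟩)
    (hclassComm : ∀ i k l, k ≠ ⟨0, hd⟩ → l ≠ ⟨0, hd⟩ →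
      U i k * U i l = U i l * U i k)
    (Bstar : OrthonormalBasis (Fin d) ℂ (EuclideanSpace ℂ (Fin d)))
    (Bs : Fin d → OrthonormalBasis (Fin d) ℂ (EuclideanSpace ℂ (Fin d)))
    (hBstar : ∀ x, x ≠ (⟨0, hd⟩ : Fin d) → ∀ j, ∃ μ : ℂ,
      (U x ⟨0, hd⟩).mulVec (Bstar j) = fun m => μ * Bstar j m)
    (hBs : ∀ i k, k ≠ (⟨0, hd⟩ : Fin d) → ∀ j, ∃ μ : ℂ,
      (U i k).mulVec (Bs i j) = fun m => μ * Bs i j m) :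
    (∀ i j k, ‖(inner ℂ (Bstar j) (Bs i k) : ℂ)‖ ^ 2 = 1 / (d : ℝ)) ∧
    (∀ i m, i ≠ m → ∀ j k, ‖(inner ℂ (Bs i j) (Bs m k) : ℂ)‖ ^ 2 = 1 / (d : ℝ)) :=
  partitioned_ueb_gives_maximal_mubs_general d hd U htr hId Bstar Bs hBstar hBs
end

section
/- Let L : {0,…,d−1}² → {0,…,d−1} be a Latin square (each row and each column of L is a permutation of {0,…,d−1}), and for each j let H^j be a d×d complex Hadamard matrix. Define operators V_{ij} on ℂ^d by V_{ij}(e_k) = (1/1)·H^j_{k i} · e_{L(j,k)} (so V_{ij} is a monomial matrix whose nonzero entries are the entries of column i of H^j, placed according to the j-th row of L). Then {V_{ij} : i,j ∈ {0,…,d−1}} is a unitary error basis: each V_{ij} is unitary and tr(V_{ij}† V_{mn}) = d·δ_{im}δ_{jn}. -/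
/-!
`V i j` is the monomial matrix with pattern `L j` and weights the column `i` of `H j`.
For monomial matrices `V, W` with patterns `σ, τ`, the entry `(a, b)` of `Vᴴ W` vanishes
unless `σ a = τ b`. Two different rows of a Latin square disagree everywhere, so then
`Vᴴ W` has zero diagonal. For equal (injective) patterns `Vᴴ W` is diagonal with entries
`star (x a) * y a`: unimodular weights give unitarity, and the trace is the inner product of
two columns of `H j`, which is `d δ` because `H jᴴ H j = d • 1`.
-/

/-- The shift-and-multiply operator `V i j` built from a Latin square `L` and a family of
Hadamard matrices `H`: it sends `e k` to `H j k i • e (L j k)`. -/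
def shiftMultiplyOp (d : ℕ) (L : Fin d → Fin d → Fin d)
    (H : Fin d → Matrix (Fin d) (Fin d) ℂ) (i j : Fin d) :
    Matrix (Fin d) (Fin d) ℂ :=
  Matrix.of fun r k => if r = L j k then (H j) k i else 0

namespace Matrix

variable {m n R : Type*}

def monomial [DecidableEq m] [Zero R] (σ : n → m) (x : n → R) : Matrix m n R :=
  of fun r k => if r = σ k then x k else 0

section Monomial

variable [Fintype m] [DecidableEq m] [NonUnitalSemiring R] [StarRing R]

theorem conjTranspose_monomial_mul_monomial (σ τ : n → m) (x y : n → R) :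
    (monomial σ x)ᴴ * monomial τ y =
      of fun a b => if σ a = τ b then star (x a) * y b else 0 := by
  ext a b
  simp [mul_apply, monomial, apply_ite star, ite_mul, mul_ite, eq_comm]

theorem conjTranspose_monomial_mul_monomial_of_injective [DecidableEq n] {σ : n → m}
    (hσ : Function.Injective σ) (x y : n → R) :
    (monomial σ x)ᴴ * monomial σ y = diagonal fun a => star (x a) * y a := by
  ext a b
  by_cases hab : a = b <;> simp [conjTranspose_monomial_mul_monomial, hσ.eq_iff, hab]

theorem trace_conjTranspose_monomial_mul_monomial_of_forall_ne [Fintype n] {σ τ : n → m}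
    (hστ : ∀ a, σ a ≠ τ a) (x y : n → R) :
    trace ((monomial σ x)ᴴ * monomial τ y) = 0 := by
  simp [trace, conjTranspose_monomial_mul_monomial, hστ]

end Monomial

theorem monomial_mem_unitaryGroup [Fintype n] [DecidableEq n] [CommRing R] [StarRing R]
    {σ : n → n} (hσ : Function.Injective σ) {x : n → R} (hx : ∀ k, star (x k) * x k = 1) :
    monomial σ x ∈ unitaryGroup n R := by
  rw [mem_unitaryGroup_iff', star_eq_conjTranspose,
    conjTranspose_monomial_mul_monomial_of_injective hσ, ← diagonal_one]
  exact congrArg diagonal (funext hx)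

theorem mul_eq_smul_one_comm [Fintype n] [DecidableEq n] {K : Type*} [Field K]
    {A B : Matrix n n K} {c : K} (hc : c ≠ 0) (h : A * B = c • 1) : B * A = c • 1 := by
  have hinv : A * (c⁻¹ • B) = 1 := by
    rw [Matrix.mul_smul, h, smul_smul, inv_mul_cancel₀ hc, one_smul]
  calc B * A = c • ((c⁻¹ • B) * A) := by
        rw [Matrix.smul_mul, smul_smul, mul_inv_cancel₀ hc, one_smul]
    _ = c • 1 := by rw [mul_eq_one_comm.mp hinv]

end Matrix

open Matrix in
/-- Shift-and-multiply construction: if `L` is a Latin square (each row and each column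
is a permutation of `{0,…,d−1}`) and each `H j` is a complex Hadamard matrix, then the
`d²` monomial operators `V i j`, where `V i j (e k) = H j k i • e (L j k)`, form a
unitary error basis: each `V i j` is unitary and
`tr((V i j)ᴴ · V m n) = d·δ_{im}·δ_{jn}`. -/
theorem shift_and_multiply_is_ueb (d : ℕ)
    (L : Fin d → Fin d → Fin d)
    (hrow : ∀ j, Function.Bijective (fun k => L j k))
    (hcol : ∀ k, Function.Bijective (fun j => L j k))
    (H : Fin d → Matrix (Fin d) (Fin d) ℂ)
    (hHmod : ∀ j k i, ‖(H j) k i‖ = 1)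
    (hHunit : ∀ j, H j * (H j).conjTranspose = (d : ℂ) • 1) :
    (∀ i j, shiftMultiplyOp d L H i j ∈ Matrix.unitaryGroup (Fin d) ℂ) ∧
    ∀ i j m n,
      Matrix.trace ((shiftMultiplyOp d L H i j).conjTranspose * shiftMultiplyOp d L H m n)
        = if i = m ∧ j = n then (d : ℂ) else 0 := by
  have hV : ∀ i j, shiftMultiplyOp d L H i j = monomial (L j) fun k => H j k i :=
    fun _ _ => rfl
  have hHconjH : ∀ j, (H j)ᴴ * H j = (d : ℂ) • 1 := by
    intro j
    rcases eq_or_ne d 0 with rfl | hd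
    · exact Subsingleton.elim _ _
    · exact mul_eq_smul_one_comm (Nat.cast_ne_zero.2 hd) (hHunit j)
  refine ⟨fun i j => ?_, fun i j m n => ?_⟩
  · refine hV i j ▸ monomial_mem_unitaryGroup (hrow j).injective fun k => ?_
    rw [RCLike.star_def, RCLike.conj_mul, hHmod]
    norm_num
  · rw [hV, hV]
    by_cases hjn : j = n
    · subst hjn
      rw [conjTranspose_monomial_mul_monomial_of_injective (hrow j).injective, trace_diagonal]
      have hcols : ∑ a, star (H j a i) * H j a m = ((H j)ᴴ * H j) i m := by
        simp only [mul_apply, conjTranspose_apply]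
      rw [hcols, hHconjH]
      by_cases him : i = m <;> simp [him]
    · rw [trace_conjTranspose_monomial_mul_monomial_of_forall_ne
        fun a h => hjn ((hcol a).injective h)]
      simp [hjn]
end

section
/- Let B^*, B^0, …, B^{d−1} be a maximal family of d+1 mutually unbiased orthonormal bases of ℂ^d, where B^* = (e_m) is the standard basis and B^i = (b^i_j)_{j=0}^{d−1}. For each i let H^i be a d×d complex Hadamard matrix whose 0-th column has all entries equal to 1, and let G be a d×d complex Hadamard matrix whose 0-th row and 0-th column have all entries equal to 1. Define, for i ∈ {0,…,d−1} and k ∈ {1,…,d−1}, the operator U_{ik} = Σ_j H^i_{jk} |b^i_j⟩⟨b^i_j|, and for a ∈ {0,…,d−1} the diagonal operator D_a = Σ_m G_{ma} |e_m⟩⟨e_m|. Then the d² operators {D_a : a ∈ {0,…,d−1}} ∪ {U_{ik} : i ∈ {0,…,d−1}, k ∈ {1,…,d−1}} form a unitary error basis on ℂ^d containing the identity D_0 = I. -/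
noncomputable section

/-- The rank-one projection `|v⟩⟨v|` as a matrix. -/
def rankOneProj (d : ℕ) (v : EuclideanSpace ℂ (Fin d)) : Matrix (Fin d) (Fin d) ℂ :=
  Matrix.of fun m n => v m * (starRingEnd ℂ) (v n)

/-- The operator `U i k = Σ_j H i j k • |b i j⟩⟨b i j|`. -/
def mubUEBOp (d : ℕ) (b : Fin d → Fin d → EuclideanSpace ℂ (Fin d))
    (H : Fin d → Matrix (Fin d) (Fin d) ℂ) (i k : Fin d) : Matrix (Fin d) (Fin d) ℂ :=
  ∑ j, (H i) j k • rankOneProj d (b i j)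

/-- The diagonal operator `D a = Σ_m G m a • |e m⟩⟨e m|`. -/
def mubDiagOp (d : ℕ) (G : Matrix (Fin d) (Fin d) ℂ) (a : Fin d) :
    Matrix (Fin d) (Fin d) ℂ :=
  Matrix.diagonal fun m => G m a

/-- The combined family: for `k = 0` the diagonal operator `D i`, for `k ≠ 0` the
operator `U i k`. -/
def mubUEBFamily (d : ℕ) (hd : 0 < d) (b : Fin d → Fin d → EuclideanSpace ℂ (Fin d))
    (H : Fin d → Matrix (Fin d) (Fin d) ℂ) (G : Matrix (Fin d) (Fin d) ℂ)
    (i k : Fin d) : Matrix (Fin d) (Fin d) ℂ :=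
  if k = ⟨0, hd⟩ then mubDiagOp d G i else mubUEBOp d b H i k


/-!
Each `U i k` is diagonal in the orthonormal basis `B i` with unimodular eigenvalues `H i j k`,
and each `D a` is diagonal with unimodular entries, so all are unitary. Since
`tr (|v⟩⟨v| |w⟩⟨w|) = |⟪v, w⟫|²`, the trace `tr (U i k† U i' k')` is `((H i)† H i) k k'` when
`i = i'`, while for `i ≠ i'` unbiasedness makes every weight `1 / d`, so the trace factors through
the column sum `∑ j, H i' j k'`; this vanishes for `k' ≠ 0` because the `0`-th column of `H i'` is
orthogonal to column `k'` and consists of ones. By unbiasedness with the standard basis the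
diagonal of `U i k` is `(1 / d) ∑ j, H i j k = 0`, which makes every `U` orthogonal to the
diagonal matrices `D a`, and these are mutually orthogonal because `G† G = d • 1`.
-/

open Matrix ComplexConjugate
open scoped InnerProductSpace

namespace Matrix

variable {ι : Type*} [Fintype ι] [DecidableEq ι]

theorem diagonal_mem_unitaryGroup {c : ι → ℂ} (hc : ∀ i, ‖c i‖ = 1) :
    diagonal c ∈ unitaryGroup ι ℂ := by
  rw [mem_unitaryGroup_iff, star_eq_conjTranspose, diagonal_conjTranspose,
    diagonal_mul_diagonal, ← diagonal_one]
  congr 1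
  ext i
  simp [RCLike.mul_conj, hc]

theorem sum_col_eq_zero_of_conjTranspose_mul_self_eq_smul {H : Matrix ι ι ℂ} {c : ℂ}
    (hH : Hᴴ * H = c • 1) {i₀ k : ι} (hcol : ∀ j, H j i₀ = 1) (hk : k ≠ i₀) :
    ∑ j, H j k = 0 := by
  simpa [mul_apply, hcol, hk.symm] using congr_fun (congr_fun hH i₀) k

theorem trace_diagonal_mul_eq_zero {A : Matrix ι ι ℂ} (hA : ∀ p, A p p = 0) (c : ι → ℂ) :
    trace (diagonal c * A) = 0 := by
  simp [trace, diagonal_mul, hA]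

end Matrix

section RankOne

variable {d : ℕ}

theorem rankOneProj_conjTranspose (v : EuclideanSpace ℂ (Fin d)) :
    (rankOneProj d v)ᴴ = rankOneProj d v := by
  ext m n
  simp [rankOneProj, conjTranspose_apply, mul_comm]

theorem rankOneProj_apply_self (v : EuclideanSpace ℂ (Fin d)) (m : Fin d) :
    rankOneProj d v m m = ((‖v m‖ ^ 2 : ℝ) : ℂ) := by
  simp [rankOneProj, Complex.mul_conj']

theorem trace_rankOneProj_mul (v w : EuclideanSpace ℂ (Fin d)) :
    trace (rankOneProj d v * rankOneProj d w) = ((‖⟪v, w⟫_ℂ‖ ^ 2 : ℝ) : ℂ) := by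
  have hinner (x y : EuclideanSpace ℂ (Fin d)) : ⟪x, y⟫_ℂ = ∑ p, conj (x p) * y p := by
    simp [PiLp.inner_apply, mul_comm]
  rw [Complex.ofReal_pow, ← Complex.mul_conj', inner_conj_symm, hinner, hinner,
    Finset.sum_mul_sum]
  simp only [trace, diag_apply, mul_apply, rankOneProj, of_apply]
  rw [Finset.sum_comm]
  exact Finset.sum_congr rfl fun p _ => Finset.sum_congr rfl fun q _ => by ring

theorem trace_conjTranspose_sum_smul_rankOneProj_mul {κ : Type*} [Fintype κ] (a c : κ → ℂ)
    (v w : κ → EuclideanSpace ℂ (Fin d)) :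
    trace ((∑ j, a j • rankOneProj d (v j))ᴴ * ∑ j', c j' • rankOneProj d (w j')) =
      ∑ j, ∑ j', conj (a j) * c j' * ((‖⟪v j, w j'⟫_ℂ‖ ^ 2 : ℝ) : ℂ) := by
  simp only [conjTranspose_sum, conjTranspose_smul, rankOneProj_conjTranspose, Finset.sum_mul,
    Finset.mul_sum, smul_mul_smul_comm, trace_sum, trace_smul, trace_rankOneProj_mul,
    smul_eq_mul, Complex.star_def]
  exact Finset.sum_comm

-- `(basisFun _ ℂ).toBasis.toMatrix b` is the matrix whose `j`-th column is `b j`.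
theorem sum_smul_rankOneProj_eq_mul_diagonal_mul
    (b : OrthonormalBasis (Fin d) ℂ (EuclideanSpace ℂ (Fin d))) (c : Fin d → ℂ) :
    ∑ j, c j • rankOneProj d (b j) =
      (EuclideanSpace.basisFun (Fin d) ℂ).toBasis.toMatrix b * diagonal c *
        ((EuclideanSpace.basisFun (Fin d) ℂ).toBasis.toMatrix b)ᴴ := by
  ext m n
  simp only [Matrix.sum_apply, Matrix.smul_apply, rankOneProj, of_apply, smul_eq_mul, mul_apply,
    diagonal_apply, conjTranspose_apply, Module.Basis.toMatrix_apply]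
  simp [mul_assoc, mul_left_comm (c _)]

theorem sum_smul_rankOneProj_mem_unitaryGroup
    (b : OrthonormalBasis (Fin d) ℂ (EuclideanSpace ℂ (Fin d))) {c : Fin d → ℂ}
    (hc : ∀ j, ‖c j‖ = 1) :
    ∑ j, c j • rankOneProj d (b j) ∈ unitaryGroup (Fin d) ℂ := by
  have hM := (EuclideanSpace.basisFun (Fin d) ℂ).toMatrix_orthonormalBasis_mem_unitary b
  rw [sum_smul_rankOneProj_eq_mul_diagonal_mul]
  exact mul_mem (mul_mem hM (diagonal_mem_unitaryGroup hc)) (Unitary.star_mem hM)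

end RankOne

section UnitaryErrorBasis

variable {d : ℕ} (b : Fin d → Fin d → EuclideanSpace ℂ (Fin d))
  (H : Fin d → Matrix (Fin d) (Fin d) ℂ)

theorem mubUEBOp_apply_self_eq_zero {i k p : Fin d} {r : ℝ} (hb : ∀ j, ‖b i j p‖ ^ 2 = r)
    (hk : ∑ j, H i j k = 0) : mubUEBOp d b H i k p p = 0 := by
  simp only [mubUEBOp, Matrix.sum_apply, Matrix.smul_apply, rankOneProj_apply_self, hb,
    smul_eq_mul, ← Finset.sum_mul, hk, zero_mul]

theorem trace_mubUEBOp_conjTranspose_mul_self {i : Fin d} (hb : Orthonormal ℂ (b i))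
    (k n : Fin d) :
    trace ((mubUEBOp d b H i k)ᴴ * mubUEBOp d b H i n) = ((H i)ᴴ * H i) k n := by
  simp only [mubUEBOp, trace_conjTranspose_sum_smul_rankOneProj_mul, orthonormal_iff_ite.mp hb]
  simp [mul_apply, apply_ite]

theorem trace_mubUEBOp_conjTranspose_mul_eq_zero {i m n : Fin d} {r : ℝ}
    (hb : ∀ j j', ‖⟪b i j, b m j'⟫_ℂ‖ ^ 2 = r) (hn : ∑ j', H m j' n = 0) (k : Fin d) :
    trace ((mubUEBOp d b H i k)ᴴ * mubUEBOp d b H m n) = 0 := by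
  simp only [mubUEBOp, trace_conjTranspose_sum_smul_rankOneProj_mul, hb,
    mul_right_comm _ _ (r : ℂ), ← Finset.mul_sum, hn, mul_zero, Finset.sum_const_zero]

variable {b H} in
theorem mubUEBFamily_of_eq {hd : 0 < d} {G : Matrix (Fin d) (Fin d) ℂ} {i k : Fin d}
    (hk : k = ⟨0, hd⟩) : mubUEBFamily d hd b H G i k = mubDiagOp d G i :=
  if_pos hk

variable {b H} in
theorem mubUEBFamily_of_ne {hd : 0 < d} {G : Matrix (Fin d) (Fin d) ℂ} {i k : Fin d}
    (hk : k ≠ ⟨0, hd⟩) : mubUEBFamily d hd b H G i k = mubUEBOp d b H i k :=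
  if_neg hk

theorem trace_mubDiagOp_conjTranspose_mul (G : Matrix (Fin d) (Fin d) ℂ) (a a' : Fin d) :
    trace ((mubDiagOp d G a)ᴴ * mubDiagOp d G a') = (Gᴴ * G) a a' := by
  simp [mubDiagOp, trace_diagonal, mul_apply]

end UnitaryErrorBasis

theorem mub_gives_partitioned_ueb_general (d : ℕ) (hd : 0 < d)
    (B : Fin d → OrthonormalBasis (Fin d) ℂ (EuclideanSpace ℂ (Fin d)))
    (hstarMUB : ∀ i m j,
      ‖(inner ℂ (EuclideanSpace.single m (1 : ℂ)) (B i j) : ℂ)‖ ^ 2 = 1 / (d : ℝ))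
    (hMUB : ∀ i m, i ≠ m → ∀ j k,
      ‖(inner ℂ (B i j) (B m k) : ℂ)‖ ^ 2 = 1 / (d : ℝ))
    (H : Fin d → Matrix (Fin d) (Fin d) ℂ)
    (hHmod : ∀ i j k, ‖(H i) j k‖ = 1)
    (hHunit' : ∀ i, (H i).conjTranspose * H i = (d : ℂ) • 1)
    (hHcol : ∀ i j, (H i) j ⟨0, hd⟩ = 1)
    (G : Matrix (Fin d) (Fin d) ℂ)
    (hGmod : ∀ m a, ‖G m a‖ = 1)
    (hGunit' : G.conjTranspose * G = (d : ℂ) • 1)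
    (hGcol : ∀ m, G m ⟨0, hd⟩ = 1) :
    mubUEBFamily d hd (fun i j => B i j) H G ⟨0, hd⟩ ⟨0, hd⟩ = 1 ∧
    (∀ i k, mubUEBFamily d hd (fun i j => B i j) H G i k ∈ Matrix.unitaryGroup (Fin d) ℂ) ∧
    ∀ i k m n,
      Matrix.trace ((mubUEBFamily d hd (fun i j => B i j) H G i k).conjTranspose *
          mubUEBFamily d hd (fun i j => B i j) H G m n)
        = if i = m ∧ k = n then (d : ℂ) else 0 := by
  have hHsum (i : Fin d) {k : Fin d} (hk : k ≠ ⟨0, hd⟩) : ∑ j, H i j k = 0 :=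
    sum_col_eq_zero_of_conjTranspose_mul_self_eq_smul (hHunit' i) (hHcol i) hk
  have hUdiag (i : Fin d) {k : Fin d} (hk : k ≠ ⟨0, hd⟩) (p : Fin d) :
      mubUEBOp d (fun i j => B i j) H i k p p = 0 :=
    mubUEBOp_apply_self_eq_zero _ _
      (fun j => by simpa [EuclideanSpace.inner_single_left] using hstarMUB i p j) (hHsum i hk)
  refine ⟨?_, fun i k => ?_, fun i k m n => ?_⟩
  · rw [mubUEBFamily_of_eq rfl, mubDiagOp]
    simp [hGcol]
  · rcases eq_or_ne k ⟨0, hd⟩ with hk | hk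
    · exact mubUEBFamily_of_eq hk ▸ diagonal_mem_unitaryGroup (hGmod · i)
    · exact mubUEBFamily_of_ne hk ▸
        sum_smul_rankOneProj_mem_unitaryGroup (B i) (hHmod i · k)
  · rcases eq_or_ne k ⟨0, hd⟩ with hk | hk <;> rcases eq_or_ne n ⟨0, hd⟩ with hn | hn
    · rw [mubUEBFamily_of_eq hk, mubUEBFamily_of_eq hn,
        trace_mubDiagOp_conjTranspose_mul, hGunit']
      simp [one_apply, hk, hn]
    · rw [mubUEBFamily_of_eq hk, mubUEBFamily_of_ne hn, mubDiagOp,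
        diagonal_conjTranspose, trace_diagonal_mul_eq_zero (hUdiag m hn)]
      simp [hk, Ne.symm hn]
    · rw [mubUEBFamily_of_ne hk, mubUEBFamily_of_eq hn, mubDiagOp,
        trace_mul_comm, trace_diagonal_mul_eq_zero fun p => by simp [hUdiag i hk p]]
      simp [hk, hn]
    · rw [mubUEBFamily_of_ne hk, mubUEBFamily_of_ne hn]
      by_cases him : i = m
      · subst him
        rw [trace_mubUEBOp_conjTranspose_mul_self (fun i j => B i j) H (B i).orthonormal,
          hHunit']
        simp [one_apply]
      · rw [trace_mubUEBOp_conjTranspose_mul_eq_zero (fun i j => B i j) H (hMUB i m him)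
          (hHsum m hn)]
        simp [him]

/-- Given a maximal family of `d+1` mutually unbiased bases of `ℂ^d` (the standard basis
together with bases `B i`), Hadamard matrices `H i` whose `0`-th column is all ones and a
Hadamard matrix `G` whose `0`-th row and `0`-th column are all ones, the `d²` operators
`{D a} ∪ {U i k : k ≠ 0}`, where `U i k = Σ_j H i j k • |b i j⟩⟨b i j|` and
`D a = Σ_m G m a • |e m⟩⟨e m|`, form a unitary error basis on `ℂ^d` containing the
identity `D 0 = I`. -/
theorem mub_gives_partitioned_ueb (d : ℕ) (hd : 0 < d)
    (B : Fin d → OrthonormalBasis (Fin d) ℂ (EuclideanSpace ℂ (Fin d)))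
    (hstarMUB : ∀ i m j,
      ‖(inner ℂ (EuclideanSpace.single m (1 : ℂ)) (B i j) : ℂ)‖ ^ 2 = 1 / (d : ℝ))
    (hMUB : ∀ i m, i ≠ m → ∀ j k,
      ‖(inner ℂ (B i j) (B m k) : ℂ)‖ ^ 2 = 1 / (d : ℝ))
    (H : Fin d → Matrix (Fin d) (Fin d) ℂ)
    (hHmod : ∀ i j k, ‖(H i) j k‖ = 1)
    (hHunit : ∀ i, H i * (H i).conjTranspose = (d : ℂ) • 1)
    (hHunit' : ∀ i, (H i).conjTranspose * H i = (d : ℂ) • 1)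
    (hHcol : ∀ i j, (H i) j ⟨0, hd⟩ = 1)
    (G : Matrix (Fin d) (Fin d) ℂ)
    (hGmod : ∀ m a, ‖G m a‖ = 1)
    (hGunit : G * G.conjTranspose = (d : ℂ) • 1)
    (hGunit' : G.conjTranspose * G = (d : ℂ) • 1)
    (hGrow : ∀ a, G ⟨0, hd⟩ a = 1)
    (hGcol : ∀ m, G m ⟨0, hd⟩ = 1) :
    mubUEBFamily d hd (fun i j => B i j) H G ⟨0, hd⟩ ⟨0, hd⟩ = 1 ∧
    (∀ i k, mubUEBFamily d hd (fun i j => B i j) H G i k ∈ Matrix.unitaryGroup (Fin d) ℂ) ∧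
    ∀ i k m n,
      Matrix.trace ((mubUEBFamily d hd (fun i j => B i j) H G i k).conjTranspose *
          mubUEBFamily d hd (fun i j => B i j) H G m n)
        = if i = m ∧ k = n then (d : ℂ) else 0 :=
  mub_gives_partitioned_ueb_general d hd B hstarMUB hMUB H hHmod hHunit' hHcol G hGmod hGunit' hGcol

end
end

section
/- Let F be a finite field with q elements and let χ : (F,+) → ℂ^× be a nontrivial additive character. On the Hilbert space ℂ^F with standard basis (e_i)_{i∈F}, define for x, a ∈ F the operator U_{x,a} by: U_{x,0}(e_i) = e_{i+x}, and for a ≠ 0, U_{x,a}(e_i) = χ(a·i)·e_{i + a·x}. Then the q² operators {U_{x,a} : x,a ∈ F} form a unitary error basis on ℂ^F: each is unitary and tr(U_{x,a}† U_{x',a'}) = q·δ_{x,x'}·δ_{a,a'}. -/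
/-- The operator `U x a` on `ℂ^F` built from a finite field `F` and an additive
character `χ`: `U x 0 (e i) = e (i + x)` and, for `a ≠ 0`,
`U x a (e i) = χ (a * i) • e (i + a * x)`. -/
def finiteFieldUEBOp (F : Type*) [Field F] [Fintype F] [DecidableEq F]
    (χ : AddChar F ℂ) (x a : F) : Matrix F F ℂ :=
  Matrix.of fun m i =>
    if a = 0 then (if m = i + x then 1 else 0)
    else if m = i + a * x then χ (a * i) else 0

section aux

variable {F : Type*} [Field F] [Fintype F] [DecidableEq F] (χ : AddChar F ℂ)

private lemma ueb_entry (x a m i : F) :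
    finiteFieldUEBOp F χ x a m i =
      if m = i + (if a = 0 then x else a * x) then χ (a * i) else 0 := by
  rcases eq_or_ne a 0 with h | h <;> simp [finiteFieldUEBOp, h]

private lemma chi_ne_zero (t : F) : χ t ≠ 0 := by
  intro h
  have : χ t * χ (-t) = 1 := by rw [← AddChar.map_add_eq_mul]; simp
  rw [h, zero_mul] at this
  exact zero_ne_one this

private lemma conj_mul_self (t : F) :
    (starRingEnd ℂ) (χ t) * χ t = 1 := by
  rw [← AddChar.inv_apply_eq_conj]
  exact inv_mul_cancel₀ (chi_ne_zero χ t)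

private lemma sum_chi_mul {b : F} (hχ : χ ≠ 1) (hb : b ≠ 0) :
    ∑ m : F, χ (b * m) = 0 := by
  rw [Fintype.sum_bijective (fun m => b * m)
    (mulLeft_bijective₀ b hb) _ (fun t => χ t) (fun m => rfl)]
  exact AddChar.sum_eq_zero_of_ne_one hχ

end aux

/-- Let `F` be a finite field with `q` elements and `χ` a nontrivial additive character
of `F`.  Then the `q²` operators `U x a` (with `U x 0 (e i) = e (i + x)` and
`U x a (e i) = χ(a·i) • e (i + a·x)` for `a ≠ 0`) form a unitary error basis on `ℂ^F`:
each is unitary and `tr((U x a)ᴴ · U x' a') = q·δ_{x,x'}·δ_{a,a'}`. -/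
theorem finite_field_ueb (F : Type*) [Field F] [Fintype F] [DecidableEq F]
    (χ : AddChar F ℂ) (hχ : χ ≠ 1) :
    (∀ x a : F, finiteFieldUEBOp F χ x a ∈ Matrix.unitaryGroup F ℂ) ∧
    ∀ x a x' a' : F,
      Matrix.trace ((finiteFieldUEBOp F χ x a).conjTranspose * finiteFieldUEBOp F χ x' a')
        = if x = x' ∧ a = a' then (Fintype.card F : ℂ) else 0 := by
  have key : ∀ x a x' a' m i : F,
      (((finiteFieldUEBOp F χ x a).conjTranspose * finiteFieldUEBOp F χ x' a') m i)
        = if (m + (if a = 0 then x else a * x)) = (i + (if a' = 0 then x' else a' * x'))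
          then (starRingEnd ℂ) (χ (a * m)) * χ (a' * i) else 0 := by
    intro x a x' a' m i
    set s := if a = 0 then x else a * x with hs
    set s' := if a' = 0 then x' else a' * x' with hs'
    rw [Matrix.mul_apply]
    rw [Finset.sum_eq_single (m + s)]
    · simp only [Matrix.conjTranspose_apply, ueb_entry, ← hs, ← hs', if_pos rfl]
      rw [if_pos trivial]
      by_cases hc : m + s = i + s'
      · rw [if_pos hc, if_pos hc, starRingEnd_apply]
      · rw [if_neg hc, if_neg hc, mul_zero]
    · intro k _ hk
      simp only [Matrix.conjTranspose_apply, ueb_entry, ← hs, ← hs']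
      rw [if_neg (by exact fun h => hk h)]
      simp
    · intro h; exact absurd (Finset.mem_univ _) h
  constructor
  · intro x a
    rw [Matrix.mem_unitaryGroup_iff']
    ext m i
    rw [show (star (finiteFieldUEBOp F χ x a)) = (finiteFieldUEBOp F χ x a).conjTranspose from rfl,
      key x a x a m i]
    rcases eq_or_ne m i with h | h
    · subst h
      simp [conj_mul_self, Matrix.one_apply]
    · rw [if_neg (by simpa using h), Matrix.one_apply_ne h]
  · intro x a x' a'
    set s := if a = 0 then x else a * x with hs
    set s' := if a' = 0 then x' else a' * x' with hs'
    have hsum : Matrix.trace ((finiteFieldUEBOp F χ x a).conjTranspose *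
        finiteFieldUEBOp F χ x' a')
        = if s = s' then ∑ m : F, χ ((a' - a) * m) else 0 := by
      rw [Matrix.trace]
      simp only [Matrix.diag_apply, key x a x' a', ← hs, ← hs', add_right_inj]
      rcases eq_or_ne s s' with h | h
      · rw [if_pos h]
        refine Finset.sum_congr rfl fun m _ => ?_
        rw [if_pos h, ← AddChar.inv_apply_eq_conj, ← AddChar.map_neg_eq_inv,
          ← AddChar.map_add_eq_mul]
        ring_nf
      · simp [h]
    rcases eq_or_ne a a' with ha | ha
    · subst ha
      have hss : s = s' ↔ x = x' := by
        rcases eq_or_ne a 0 with h0 | h0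
        · simp [hs, hs', h0]
        · simp [hs, hs', h0, mul_right_inj' h0]
      rcases eq_or_ne x x' with hx | hx
      · rw [hsum, if_pos (hss.mpr hx), if_pos ⟨hx, rfl⟩]
        simp
      · rw [hsum, if_neg (fun h => hx (hss.mp h)), if_neg (fun h => hx h.1)]
    · have hr : (if x = x' ∧ a = a' then (Fintype.card F : ℂ) else 0) = 0 :=
        if_neg (fun h => ha h.2)
      rw [hsum, hr]
      rcases eq_or_ne s s' with h | h
      · rw [if_pos h, sum_chi_mul χ hχ (sub_ne_zero_of_ne (Ne.symm ha))]
      · rw [if_neg h]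
end

section
/- With F a finite field of order q, χ a nontrivial additive character, and U_{x,a} defined by U_{x,0}(e_i) = e_{i+x} and U_{x,a}(e_i) = χ(a·i)·e_{i+a·x} for a ≠ 0: for each fixed x ∈ F and all a, b ∈ F∖{0}, the operators U_{x,a} and U_{x,b} commute; also all the shift operators U_{x,0} (x ∈ F) pairwise commute. Hence the unitary error basis {U_{x,a}} is partitioned into the identity U_{0,0}, the class C_* = {U_{x,0} : x ≠ 0}, and the q classes C_x = {U_{x,a} : a ≠ 0}, each class together with the identity forming a maximal commuting family of q unitaries. -/
/-- With `F` a finite field of order `q` and `χ` a nontrivial additive character, the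
unitary error basis `{U x a}` is partitioned: `U 0 0` is the identity, the shift
operators `U x 0` pairwise commute (the class `C_* = {U x 0 : x ≠ 0}` together with the
identity), and for each fixed `x` the operators `U x a` with `a ≠ 0` pairwise commute
(the class `C x` together with the identity). -/
theorem finite_field_ueb_partitioned (F : Type*) [Field F] [Fintype F] [DecidableEq F]
    (χ : AddChar F ℂ) (hχ : χ ≠ 1) :
    finiteFieldUEBOp F χ 0 0 = 1 ∧
    (∀ x y : F, finiteFieldUEBOp F χ x 0 * finiteFieldUEBOp F χ y 0
      = finiteFieldUEBOp F χ y 0 * finiteFieldUEBOp F χ x 0) ∧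
    ∀ x a b : F, a ≠ 0 → b ≠ 0 →
      finiteFieldUEBOp F χ x a * finiteFieldUEBOp F χ x b
        = finiteFieldUEBOp F χ x b * finiteFieldUEBOp F χ x a := by
  refine ⟨?_, ?_, ?_⟩
  · ext m i
    simp [finiteFieldUEBOp, Matrix.one_apply, eq_comm]
  · intro x y
    ext m i
    simp only [finiteFieldUEBOp, Matrix.mul_apply, Matrix.of_apply, if_true, ite_mul, one_mul,
      zero_mul, mul_ite, mul_one, mul_zero, if_pos rfl]
    rw [Finset.sum_ite_eq' Finset.univ (i + y), Finset.sum_ite_eq' Finset.univ (i + x)]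
    simp [add_assoc, add_comm x y]
  · intro x a b ha hb
    ext m i
    simp only [finiteFieldUEBOp, Matrix.mul_apply, Matrix.of_apply, if_neg ha, if_neg hb,
      ite_mul, zero_mul, mul_ite, mul_zero]
    rw [Finset.sum_ite_eq' Finset.univ (i + b * x), Finset.sum_ite_eq' Finset.univ (i + a * x)]
    simp only [Finset.mem_univ, if_true]
    by_cases h : m = i + b * x + a * x
    · rw [if_pos h, if_pos (by rw [h]; ring)]
      rw [← AddChar.map_add_eq_mul, ← AddChar.map_add_eq_mul]
      ring_nf
    · rw [if_neg h, if_neg (fun h' => h (by rw [h']; ring))]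
end

section
/- For every prime power q = p^n, there exists a family of q+1 pairwise mutually unbiased orthonormal bases of ℂ^q. -/
open Module Finset ComplexConjugate ComplexStarModule

/-!
Fix a nontrivial additive character `χ` of `F = 𝔽_q`. The Weyl operators
`U_(x,a) f (y) = χ (a y) f (y + x)` on `ℂ^F` satisfy `U_z U_w = χ (w₂ z₁) U_(z+w)`, so the
operators indexed by one of the `q + 1` lines through the origin of `F²` commute and, being closed
under adjoints up to phases, have a joint orthonormal eigenbasis. If `v`, `w` are unit
eigenvectors for two different lines, each `U_z` is a phase times a product of an operator of
each line, hence `‖⟪v, U_z w⟫‖ = ‖⟪v, w⟫‖` for all `z`. Parseval for `χ` gives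
`∑_z ‖⟪v, U_z w⟫‖² = q`, so `q² ‖⟪v, w⟫‖² = q`.
-/

section JointEigenbasis

variable {𝕜 E : Type*} [RCLike 𝕜] [NormedAddCommGroup E] [InnerProductSpace 𝕜 E]
  [FiniteDimensional 𝕜 E]

theorem LinearMap.IsSymmetric.exists_orthonormalBasis_forall_eigenvector {κ : Type*}
    {A : κ → E →ₗ[𝕜] E} (hA : ∀ i, (A i).IsSymmetric)
    (hcomm : ∀ i j, Commute (A i) (A j)) :
    ∃ b : OrthonormalBasis (Fin (finrank 𝕜 E)) 𝕜 E, ∀ k i, ∃ μ : 𝕜, A i (b k) = μ • b k := by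
  classical
  let J : (κ → 𝕜) → Submodule 𝕜 E := fun α => ⨅ i, End.eigenspace (A i) (α i)
  have hJ : DirectSum.IsInternal J :=
    directSum_isInternal_of_pairwise_commute hA fun i j _ => hcomm i j
  have hJ_orth : OrthogonalFamily 𝕜 (fun α => J α) fun α => (J α).subtypeₗᵢ :=
    orthogonalFamily_iInf_eigenspaces hA
  -- only finitely many joint eigenspaces are nonzero: restrict to those to get a finite index
  let _ : Fintype {α // J α ≠ ⊥} := hJ.submodule_iSupIndep.fintypeNeBotOfFiniteDimensional
  have hJ' : DirectSum.IsInternal fun α : {α // J α ≠ ⊥} => J α :=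
    (DirectSum.isInternal_ne_bot_iff).2 hJ
  have hJ'_orth := hJ_orth.comp (Subtype.val_injective (p := fun α => J α ≠ ⊥))
  refine ⟨hJ'.subordinateOrthonormalBasis rfl hJ'_orth, fun k i => ?_⟩
  have hk := hJ'.subordinateOrthonormalBasis_subordinate rfl k hJ'_orth
  exact ⟨_, End.mem_eigenspace_iff.1 (Submodule.mem_iInf _ |>.1 hk i)⟩

end JointEigenbasis

section RealImaginaryPart

variable {A : Type*} [Ring A] [StarRing A] [Module ℂ A] [StarModule ℂ A] [IsScalarTower ℂ A A]
  [SMulCommClass ℂ A A]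

theorem Commute.realPart_right {x a : A} (h : Commute x a) (h' : Commute x (star a)) :
    Commute x (ℜ a : A) := by
  rw [realPart_apply_coe]
  exact (h.add_right h').smul_right _

theorem Commute.imaginaryPart_right {x a : A} (h : Commute x a) (h' : Commute x (star a)) :
    Commute x (ℑ a : A) := by
  rw [imaginaryPart_apply_coe]
  exact ((h.sub_right h').smul_right _).smul_right _

end RealImaginaryPart

theorem LinearMap.exists_orthonormalBasis_forall_eigenvector_of_commute {E : Type*}
    [NormedAddCommGroup E] [InnerProductSpace ℂ E] [FiniteDimensional ℂ E] {ι : Type*}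
    {T : ι → E →ₗ[ℂ] E} (hcomm : ∀ i j, Commute (T i) (T j))
    (hcomm_star : ∀ i j, Commute (star (T i)) (T j)) :
    ∃ b : OrthonormalBasis (Fin (finrank ℂ E)) ℂ E, ∀ k i, ∃ μ : ℂ, T i (b k) = μ • b k := by
  let S : ι ⊕ ι → E →ₗ[ℂ] E := Sum.elim (fun i => ℜ (T i)) (fun i => ℑ (T i))
  have hS : ∀ s, (S s).IsSymmetric := by
    rintro (i | i) <;> exact (LinearMap.isSymmetric_iff_isSelfAdjoint _).2 (Subtype.prop _)
  have commute_S :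
      ∀ x, (∀ j, Commute x (T j) ∧ Commute x (star (T j))) → ∀ s, Commute x (S s) := by
    rintro x hx (j | j)
    exacts [(hx j).1.realPart_right (hx j).2, (hx j).1.imaginaryPart_right (hx j).2]
  have S_commute_T : ∀ s j, Commute (S s) (T j) ∧ Commute (S s) (star (T j)) := fun s j =>
    ⟨(commute_S _ (fun i => ⟨hcomm j i, (hcomm_star i j).symm⟩) s).symm,
      (commute_S _ (fun i => ⟨hcomm_star j i, (hcomm j i).star_star⟩) s).symm⟩
  obtain ⟨b, hb⟩ := LinearMap.IsSymmetric.exists_orthonormalBasis_forall_eigenvector hS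
    fun s => commute_S _ (S_commute_T s)
  refine ⟨b, fun k i => ?_⟩
  obtain ⟨α, hα⟩ := hb k (.inl i)
  obtain ⟨β, hβ⟩ := hb k (.inr i)
  refine ⟨α + Complex.I * β, ?_⟩
  rw [← realPart_add_I_smul_imaginaryPart (T i)]
  simp only [S, Sum.elim_inl, Sum.elim_inr] at hα hβ
  rw [LinearMap.add_apply, LinearMap.smul_apply, hα, hβ, smul_smul, add_smul]

theorem AddChar.IsPrimitive.parseval {R : Type*} [CommRing R] [Fintype R] {ψ : AddChar R ℂ}
    (hψ : ψ.IsPrimitive) (g : R → ℂ) :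
    ∑ a, ‖∑ y, g y * ψ (a * y)‖ ^ 2 = Fintype.card R * ∑ y, ‖g y‖ ^ 2 := by
  classical
  apply Complex.ofReal_injective
  push_cast
  simp only [← Complex.mul_conj', map_sum, map_mul, ← AddChar.map_neg_eq_conj, sum_mul_sum]
  calc ∑ a, ∑ y, ∑ y', g y * ψ (a * y) * (conj (g y') * ψ (-(a * y')))
      = ∑ y, ∑ y', g y * conj (g y') * ∑ a, ψ (a * (y - y')) := by
        rw [sum_comm]
        refine sum_congr rfl fun y _ => ?_
        rw [sum_comm]
        simp only [mul_sum]
        refine sum_congr rfl fun y' _ => sum_congr rfl fun a _ => ?_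
        rw [mul_sub, sub_eq_add_neg, AddChar.map_add_eq_mul]
        ring
    _ = ∑ y, g y * conj (g y) * Fintype.card R := by
        simp [AddChar.sum_mulShift _ hψ, sub_eq_zero]
    _ = _ := by rw [mul_sum]; exact sum_congr rfl fun y _ => by ring

section Isometry

variable {𝕜 E : Type*} [RCLike 𝕜] [NormedAddCommGroup E] [InnerProductSpace 𝕜 E]
  {T : E →ₗ[𝕜] E} {v : E} {μ : 𝕜}

theorem norm_eq_one_of_apply_eq_smul (hT : ∀ x, ‖T x‖ = ‖x‖) (hv : v ≠ 0) (hμ : T v = μ • v) :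
    ‖μ‖ = 1 := by
  have := hT v
  rw [hμ, norm_smul] at this
  exact (mul_eq_right₀ (norm_ne_zero_iff.2 hv)).1 this

theorem norm_inner_apply_of_apply_eq_smul (hT : ∀ x, ‖T x‖ = ‖x‖) (hv : v ≠ 0)
    (hμ : T v = μ • v) (u : E) : ‖inner 𝕜 v (T u)‖ = ‖inner 𝕜 v u‖ := by
  rw [← (LinearMap.norm_map_iff_inner_map_map T).1 hT v u, hμ, inner_smul_left, norm_mul,
    RCLike.norm_conj, norm_eq_one_of_apply_eq_smul hT hv hμ, one_mul]

end Isometry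

section Weyl

variable {F : Type*} [Field F] (χ : AddChar F ℂ)

noncomputable def weyl (z : F × F) : End ℂ (EuclideanSpace ℂ F) where
  toFun f := WithLp.toLp 2 fun y => χ (z.2 * y) * f (y + z.1)
  map_add' f g := by ext y; simp [mul_add]
  map_smul' c f := by ext y; simp [mul_left_comm]

@[simp]
theorem weyl_apply (z : F × F) (f : EuclideanSpace ℂ F) (y : F) :
    weyl χ z f y = χ (z.2 * y) * f (y + z.1) := rfl

theorem weyl_mul (z w : F × F) : weyl χ z * weyl χ w = χ (w.2 * z.1) • weyl χ (z + w) := by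
  ext f y
  simp only [End.mul_apply, weyl_apply, LinearMap.smul_apply, PiLp.smul_apply, smul_eq_mul,
    Prod.fst_add, Prod.snd_add, add_mul, mul_add, AddChar.map_add_eq_mul, add_assoc]
  ring

theorem commute_weyl {z w : F × F} (h : w.2 * z.1 = z.2 * w.1) :
    Commute (weyl χ z) (weyl χ w) := by
  rw [Commute, SemiconjBy, weyl_mul, weyl_mul, h, add_comm]

theorem commute_weyl_smul_smul (d : F × F) (t s : F) :
    Commute (weyl χ (t • d)) (weyl χ (s • d)) :=
  commute_weyl χ (by simp only [Prod.smul_fst, Prod.smul_snd, smul_eq_mul]; ring)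

variable [Fintype F]

theorem adjoint_weyl (z : F × F) :
    LinearMap.adjoint (weyl χ z) = χ (z.2 * z.1) • weyl χ (-z) := by
  refine ((LinearMap.eq_adjoint_iff _ _).2 fun f g => ?_).symm
  simp only [LinearMap.smul_apply, inner_smul_left, PiLp.inner_apply, RCLike.inner_apply,
    weyl_apply, map_mul, mul_sum, Prod.fst_neg, Prod.snd_neg, ← AddChar.map_neg_eq_conj]
  refine Fintype.sum_equiv (Equiv.subRight z.1) _ _ fun y => ?_
  simp only [Equiv.subRight_apply, sub_add_cancel, ← sub_eq_add_neg]
  rw [neg_mul, neg_neg, show z.2 * (y - z.1) = -(z.2 * z.1) + z.2 * y by ring,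
    AddChar.map_add_eq_mul]
  ring

theorem norm_weyl_apply (z : F × F) (f : EuclideanSpace ℂ F) : ‖weyl χ z f‖ = ‖f‖ := by
  simp only [EuclideanSpace.norm_eq, weyl_apply, norm_mul, AddChar.norm_apply, one_mul]
  congr 1
  exact Fintype.sum_equiv (Equiv.addRight z.1) _ _ fun y => rfl

theorem inner_weyl_apply (z : F × F) (f g : EuclideanSpace ℂ F) :
    inner ℂ f (weyl χ z g) = ∑ y, conj (f y) * g (y + z.1) * χ (z.2 * y) := by
  simp only [PiLp.inner_apply, RCLike.inner_apply, weyl_apply]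
  exact sum_congr rfl fun y _ => by ring

theorem exists_orthonormalBasis_forall_eigenvector_weyl_smul (d : F × F) :
    ∃ b : OrthonormalBasis (Fin (finrank ℂ (EuclideanSpace ℂ F))) ℂ (EuclideanSpace ℂ F),
      ∀ k (t : F), ∃ μ : ℂ, weyl χ (t • d) (b k) = μ • b k :=
  LinearMap.exists_orthonormalBasis_forall_eigenvector_of_commute (commute_weyl_smul_smul χ d)
    fun t s => by
      rw [LinearMap.star_eq_adjoint, adjoint_weyl, ← neg_smul]
      exact (commute_weyl_smul_smul χ d (-t) s).smul_left _

theorem norm_inner_weyl_apply_eq {d d' : F × F} (hdd' : ∀ z, ∃ t s : F, t • d + s • d' = z)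
    {v w : EuclideanSpace ℂ F} (hv : v ≠ 0) (hw : w ≠ 0)
    (hv_eigen : ∀ t : F, ∃ μ : ℂ, weyl χ (t • d) v = μ • v)
    (hw_eigen : ∀ s : F, ∃ ν : ℂ, weyl χ (s • d') w = ν • w) (z : F × F) :
    ‖inner ℂ v (weyl χ z w)‖ = ‖inner ℂ v w‖ := by
  obtain ⟨t, s, rfl⟩ := hdd' z
  obtain ⟨μ, hμ⟩ := hv_eigen t
  obtain ⟨ν, hν⟩ := hw_eigen s
  have hsplit : weyl χ (t • d + s • d') =
      (χ ((s • d').2 * (t • d).1))⁻¹ • (weyl χ (t • d) * weyl χ (s • d')) := by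
    rw [weyl_mul, smul_smul, inv_mul_cancel₀ (by simp [← norm_ne_zero_iff]), one_smul]
  rw [hsplit, LinearMap.smul_apply, inner_smul_right, norm_mul, norm_inv, AddChar.norm_apply,
    inv_one, one_mul, End.mul_apply, hν, map_smul, inner_smul_right, norm_mul,
    norm_eq_one_of_apply_eq_smul (norm_weyl_apply χ _) hw hν, one_mul,
    norm_inner_apply_of_apply_eq_smul (norm_weyl_apply χ _) hv hμ]

variable {χ}

theorem sum_norm_sq_inner_weyl_apply (hχ : χ.IsPrimitive) (f g : EuclideanSpace ℂ F) :
    ∑ z : F × F, ‖inner ℂ f (weyl χ z g)‖ ^ 2 = Fintype.card F * (‖f‖ ^ 2 * ‖g‖ ^ 2) := by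
  simp only [Fintype.sum_prod_type, inner_weyl_apply, hχ.parseval, ← mul_sum,
    EuclideanSpace.norm_sq_eq, sum_mul_sum, norm_mul, RCLike.norm_conj, mul_pow]
  rw [sum_comm]
  congr 1
  refine sum_congr rfl fun y _ => ?_
  rw [← mul_sum]
  exact congrArg _ (Fintype.sum_equiv (Equiv.addLeft y) _ _ fun x => rfl)

theorem norm_sq_inner_eq_one_div_card (hχ : χ.IsPrimitive) {d d' : F × F}
    (hdd' : ∀ z, ∃ t s : F, t • d + s • d' = z) {v w : EuclideanSpace ℂ F} (hv : ‖v‖ = 1)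
    (hw : ‖w‖ = 1) (hv_eigen : ∀ t : F, ∃ μ : ℂ, weyl χ (t • d) v = μ • v)
    (hw_eigen : ∀ s : F, ∃ ν : ℂ, weyl χ (s • d') w = ν • w) :
    ‖inner ℂ v w‖ ^ 2 = 1 / Fintype.card F := by
  have hv0 : v ≠ 0 := by rintro rfl; simp at hv
  have hw0 : w ≠ 0 := by rintro rfl; simp at hw
  have h := sum_norm_sq_inner_weyl_apply hχ v w
  simp only [norm_inner_weyl_apply_eq χ hdd' hv0 hw0 hv_eigen hw_eigen, sum_const, card_univ,
    Fintype.card_prod, nsmul_eq_mul, hv, hw, Nat.cast_mul] at h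
  have hq : (Fintype.card F : ℝ) ≠ 0 := Nat.cast_ne_zero.2 Fintype.card_ne_zero
  rw [eq_div_iff hq]
  exact mul_left_cancel₀ hq (by linear_combination h)

end Weyl

section Lines

variable {F : Type*} [Field F]

/-- `some m` is the direction of the line of slope `m`, `none` that of the vertical line. -/
def lineDir : Option F → F × F
  | some m => (1, m)
  | none => (0, 1)

theorem exists_smul_lineDir_add_smul_lineDir_eq {o o' : Option F} (h : o ≠ o') (z : F × F) :
    ∃ t s : F, t • lineDir o + s • lineDir o' = z := by
  match o, o' with
  | none, none => exact absurd rfl h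
  | none, some m' =>
    exact ⟨z.2 - m' * z.1, z.1, Prod.ext (by simp [lineDir]) (by simp [lineDir]; ring)⟩
  | some m, none =>
    exact ⟨z.1, z.2 - m * z.1, Prod.ext (by simp [lineDir]) (by simp [lineDir]; ring)⟩
  | some m, some m' =>
    have hm : m - m' ≠ 0 := sub_ne_zero.2 fun hm => h (hm ▸ rfl)
    refine ⟨(z.2 - m' * z.1) / (m - m'), z.1 - (z.2 - m' * z.1) / (m - m'), Prod.ext ?_ ?_⟩
    · simp [lineDir]
    · simp only [lineDir, Prod.snd_add, Prod.smul_snd, smul_eq_mul]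
      field_simp
      ring

end Lines

theorem exists_mutually_unbiased_bases_of_finite_field (F : Type*) [Field F] [Fintype F] :
    ∃ B : Option F → OrthonormalBasis (Fin (finrank ℂ (EuclideanSpace ℂ F))) ℂ
        (EuclideanSpace ℂ F),
      ∀ o o', o ≠ o' → ∀ k l, ‖inner ℂ (B o k) (B o' l)‖ ^ 2 = 1 / Fintype.card F := by
  obtain ⟨χ, hχ⟩ := (AddChar.exists_apply_ne_zero (α := F)).2 one_ne_zero
  have hχ_prim : χ.IsPrimitive := .of_ne_one fun h => hχ (by simp [h])
  choose B hB using fun o => exists_orthonormalBasis_forall_eigenvector_weyl_smul χ (lineDir o)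
  exact ⟨B, fun o o' h k l => norm_sq_inner_eq_one_div_card hχ_prim
    (exists_smul_lineDir_add_smul_lineDir_eq h) ((B o).orthonormal.1 k)
    ((B o').orthonormal.1 l) (hB o k) (hB o' l)⟩

/-- For every prime power `q = p^n`, there exists a family of `q + 1` pairwise mutually
unbiased orthonormal bases of `ℂ^q`. -/
theorem exists_maximal_mub_family_prime_power (p n : ℕ) (hp : p.Prime) (hn : 0 < n) :
    ∃ B : Fin (p ^ n + 1) →
        OrthonormalBasis (Fin (p ^ n)) ℂ (EuclideanSpace ℂ (Fin (p ^ n))),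
      ∀ i j, i ≠ j → ∀ k l,
        ‖(inner ℂ (B i k) (B j l) : ℂ)‖ ^ 2 = 1 / ((p : ℝ) ^ n) := by
  have : Fact p.Prime := ⟨hp⟩
  let _ : Fintype (GaloisField p n) := Fintype.ofFinite _
  have hcard : Fintype.card (GaloisField p n) = p ^ n := by
    rw [← Nat.card_eq_fintype_card, GaloisField.card p n hn.ne']
  obtain ⟨B, hB⟩ := exists_mutually_unbiased_bases_of_finite_field (GaloisField p n)
  let eF := Fintype.equivFinOfCardEq hcard
  let eO := Fintype.equivFinOfCardEq (by rw [Fintype.card_option, hcard] :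
    Fintype.card (Option (GaloisField p n)) = p ^ n + 1)
  let L := LinearIsometryEquiv.piLpCongrLeft 2 ℂ ℂ eF
  have hrank : finrank ℂ (EuclideanSpace ℂ (GaloisField p n)) = p ^ n := by
    rw [finrank_euclideanSpace, hcard]
  refine ⟨fun i => ((B (eO.symm i)).reindex (finCongr hrank)).map L, fun i j hij k l => ?_⟩
  rw [OrthonormalBasis.map_apply, OrthonormalBasis.map_apply, LinearIsometryEquiv.inner_map_map,
    OrthonormalBasis.reindex_apply, OrthonormalBasis.reindex_apply,
    hB _ _ (eO.symm.injective.ne hij), hcard, Nat.cast_pow]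
end
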